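/- Suppose $G(\cdot,\xi)$ is $\mu_G$-strongly convex on $X$ for each $\xi$, the Bregman distance satisfies $\tfrac12\|x-z\|^2 \leq V(x,z) \leq \tfrac{Q}{2}\|x-z\|^2$, and $x_{k+1} = P_{x_k}(\gamma_k G'(x_k,\xi_k))$ with $G(x_k,\xi_k) > \eta_k$. Then for every $x \in X$: $V(x_{k+1},x) \leq \left(1 - \tfrac{\mu_G\gamma_k}{Q}\right)V(x_k,x) - \gamma_k(\eta_k - G(x,\xi_k)) + \tfrac{1}{2}\gamma_k^2\|G'(x_k,\xi_k)\|_*^2$. -/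

import Mathlib

/-!
The proximal step is a minimiser of `z ↦ ⟪γ G', z⟫ + V(x_k, z)` over the convex set `X`, so its
first-order optimality condition together with the three-point identity for Bregman distances
gives `V(x_{k+1}, x) ≤ V(x_k, x) + γ⟪G', x - x_k⟫ + γ²‖G'‖²_* / 2` (the usual mirror-descent step
bound, the last term coming from Young's inequality and `V(x_k, x_{k+1}) ≥ ‖x_k - x_{k+1}‖² / 2`).
Strong convexity of `G` and `G(x_k) > η` bound `γ⟪G', x - x_k⟫` by
`-γ(η - G(x)) - γ μ_G ‖x - x_k‖² / 2`, and quadratic growth `V ≤ Q ‖·‖² / 2` turns the last term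
into `-(μ_G γ / Q) V(x_k, x)`.
-/

open scoped RealInnerProductSpace

variable {E : Type*} [NormedAddCommGroup E] [InnerProductSpace ℝ E]

theorem inner_le_mul_abs_of_mem_upperBounds {nn : E → ℝ} (hnn₀ : ∀ x, nn x = 0 → x = 0)
    (hnn_smul : ∀ (c : ℝ) x, nn (c • x) = |c| * nn x) {y : E} {d : ℝ}
    (hd : d ∈ upperBounds {r : ℝ | ∃ x, nn x ≤ 1 ∧ ⟪x, y⟫ = r}) (w : E) :
    ⟪w, y⟫ ≤ d * |nn w| := by
  by_cases hw : nn w = 0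
  · rw [hw, abs_zero, mul_zero, hnn₀ w hw, inner_zero_left]
  have hpos : 0 < |nn w| := abs_pos.mpr hw
  have hunit : nn (|nn w|⁻¹ • w) ≤ 1 := by
    rw [hnn_smul, abs_inv, abs_abs, inv_mul_le_iff₀ hpos, mul_one]
    exact le_abs_self _
  have hle : |nn w|⁻¹ * ⟪w, y⟫ ≤ d := hd ⟨_, hunit, real_inner_smul_left _ _ _⟩
  rwa [inv_mul_le_iff₀ hpos, mul_comm] at hle

theorem IsMinOn.hasFDerivAt_nonneg_of_convex {f : E → ℝ} {f' : E →L[ℝ] ℝ} {X : Set E} {a x : E}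
    (hmin : IsMinOn f X a) (hX : Convex ℝ X) (ha : a ∈ X) (hx : x ∈ X) (hf : HasFDerivAt f f' a) :
    0 ≤ f' (x - a) :=
  hmin.localize.hasFDerivWithinAt_nonneg hf.hasFDerivWithinAt
    (mem_posTangentConeAt_of_segment_subset (by simpa using hX.segment_subset ha hx))

section Bregman

variable {ω : E → ℝ} {g : E → E} {V : E → E → ℝ}

theorem bregman_three_point (hV : ∀ x z, V x z = ω z - ω x - ⟪g x, z - x⟫) (a b c : E) :
    V a c - V b c - V a b = ⟪g b - g a, c - b⟫ := by
  simp only [hV, inner_sub_left, inner_sub_right]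
  ring

theorem inner_add_gradient_sub_nonneg_of_isMinOn [CompleteSpace E] {X : Set E} (hX : Convex ℝ X)
    (hV : ∀ x z, V x z = ω z - ω x - ⟪g x, z - x⟫) {s xk xk1 x : E}
    (hgrad : HasGradientAt ω (g xk1) xk1) (hxk1 : xk1 ∈ X) (hx : x ∈ X)
    (hprox : IsMinOn (fun z => ⟪s, z⟫ + V xk z) X xk1) :
    0 ≤ ⟪s + (g xk1 - g xk), x - xk1⟫ := by
  have hφ : (fun z => ⟪s, z⟫ + V xk z) =
      fun z => ⟪s, z⟫ + ω z - ⟪g xk, z⟫ - (ω xk - ⟪g xk, xk⟫) := by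
    funext z
    rw [hV, inner_sub_right]
    ring
  rw [hφ] at hprox
  have hderiv := ((((innerSL ℝ s).hasFDerivAt (x := xk1)).add hgrad.hasFDerivAt).sub
    ((innerSL ℝ (g xk)).hasFDerivAt)).sub_const (ω xk - ⟪g xk, xk⟫)
  have h := hprox.hasFDerivAt_nonneg_of_convex hX hxk1 hx hderiv
  simp only [sub_apply, add_apply, innerSL_apply_apply, InnerProductSpace.toDual_apply_apply] at h
  rw [inner_add_left, inner_sub_left]
  linarith

theorem bregman_prox_step_le [CompleteSpace E] {X : Set E} (hX : Convex ℝ X)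
    (hV : ∀ x z, V x z = ω z - ω x - ⟪g x, z - x⟫) {nn : E → ℝ} {G' xk xk1 x : E} {γ d : ℝ}
    (hdual : ∀ w, ⟪w, G'⟫ ≤ d * |nn w|) (hgrad : HasGradientAt ω (g xk1) xk1)
    (hVlow : 1 / 2 * nn (xk - xk1) ^ 2 ≤ V xk xk1) (hγ : 0 ≤ γ) (hxk1 : xk1 ∈ X) (hx : x ∈ X)
    (hprox : IsMinOn (fun z => ⟪γ • G', z⟫ + V xk z) X xk1) :
    V xk1 x ≤ V xk x + γ * ⟪G', x - xk⟫ + 1 / 2 * γ ^ 2 * d ^ 2 := by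
  have hopt := inner_add_gradient_sub_nonneg_of_isMinOn hX hV hgrad hxk1 hx hprox
  have hthree := bregman_three_point hV xk xk1 x
  have hsplit : x - xk1 = (x - xk) + (xk - xk1) := by abel
  rw [inner_add_left, ← hthree, hsplit, real_inner_smul_left, inner_add_right] at hopt
  have hyoung : γ * ⟪G', xk - xk1⟫ ≤ 1 / 2 * γ ^ 2 * d ^ 2 + 1 / 2 * nn (xk - xk1) ^ 2 := by
    have hbound := mul_le_mul_of_nonneg_left (real_inner_comm G' _ ▸ hdual (xk - xk1)) hγ
    nlinarith [sq_nonneg (γ * d - |nn (xk - xk1)|), sq_abs (nn (xk - xk1))]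
  linarith

end Bregman

theorem stmt_16_general {n : ℕ} (X : Set (EuclideanSpace ℝ (Fin n)))
    (hXconvex : Convex ℝ X)
    (ω : EuclideanSpace ℝ (Fin n) → ℝ) (g : EuclideanSpace ℝ (Fin n) → EuclideanSpace ℝ (Fin n))
    (nn dn : EuclideanSpace ℝ (Fin n) → ℝ)
    -- `nn` is a norm and `dn` its dual norm
    (hnn₀ : ∀ x, (nn x = 0 ↔ x = 0))
    (hnn_smul : ∀ (c : ℝ) x, nn (c • x) = |c| * nn x)
    (hdn : ∀ y, IsGreatest {r : ℝ | ∃ x, nn x ≤ 1 ∧ ⟪x, y⟫ = r} (dn y))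
    -- `ω` is continuously differentiable with gradient `g`, strongly convex with modulus 1
    (hgrad : ∀ x, HasGradientAt ω (g x) x)
    (V : EuclideanSpace ℝ (Fin n) → EuclideanSpace ℝ (Fin n) → ℝ)
    (hV : ∀ x z, V x z = ω z - ω x - ⟪g x, z - x⟫)
    -- Bregman distance sandwiched between (1/2)‖·‖² and (Q/2)‖·‖²
    (Q : ℝ) (hQ : 1 ≤ Q)
    (hVlow : ∀ x ∈ X, ∀ z ∈ X, (1 / 2) * (nn (x - z)) ^ 2 ≤ V x z)
    (hVup : ∀ x ∈ X, ∀ z ∈ X, V x z ≤ Q / 2 * (nn (x - z)) ^ 2)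
    -- `Gk` is μG-strongly convex with subgradient `G'` at `xk`
    (μG : ℝ) (hμG : 0 < μG)
    (Gk : EuclideanSpace ℝ (Fin n) → ℝ)
    (xk xk1 : EuclideanSpace ℝ (Fin n)) (hxk : xk ∈ X) (hxk1 : xk1 ∈ X)
    (G' : EuclideanSpace ℝ (Fin n))
    (hG' : ∀ x ∈ X, Gk x ≥ Gk xk + ⟪G', x - xk⟫ + μG / 2 * (nn (x - xk)) ^ 2)
    (γ η : ℝ) (hγ : 0 < γ) (hviol : Gk xk > η)
    (hprox : IsMinOn (fun z => ⟪γ • G', z⟫ + V xk z) X xk1) :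
    ∀ x ∈ X, V xk1 x ≤ (1 - μG * γ / Q) * V xk x - γ * (η - Gk x)
      + (1 / 2) * γ ^ 2 * (dn G') ^ 2 := by
  intro x hx
  have hdual := inner_le_mul_abs_of_mem_upperBounds (fun w => (hnn₀ w).mp) hnn_smul (hdn G').2
  have hstep := bregman_prox_step_le hXconvex hV hdual (hgrad xk1) (hVlow xk hxk xk1 hxk1)
    hγ.le hxk1 hx hprox
  have hdescent : γ * ⟪G', x - xk⟫ ≤ γ * (Gk x - η - μG / 2 * nn (x - xk) ^ 2) :=
    mul_le_mul_of_nonneg_left (by linarith [hG' x hx]) hγ.le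
  have hgrowth : μG * γ / Q * V xk x ≤ γ * (μG / 2 * nn (x - xk) ^ 2) := by
    have hsymm : nn (xk - x) = nn (x - xk) := by simpa using hnn_smul (-1) (x - xk)
    calc μG * γ / Q * V xk x ≤ μG * γ / Q * (Q / 2 * nn (x - xk) ^ 2) :=
          mul_le_mul_of_nonneg_left (hsymm ▸ hVup xk hxk x hx) (by positivity)
      _ = γ * (μG / 2 * nn (x - xk) ^ 2) := by field_simp
  linarith

/-- Single-step contraction inequality for the strongly convex constraint-correction step. -/
theorem stmt_16 {n : ℕ} (X : Set (EuclideanSpace ℝ (Fin n)))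
    (hXcompact : IsCompact X) (hXconvex : Convex ℝ X)
    (ω : EuclideanSpace ℝ (Fin n) → ℝ) (g : EuclideanSpace ℝ (Fin n) → EuclideanSpace ℝ (Fin n))
    (nn dn : EuclideanSpace ℝ (Fin n) → ℝ)
    -- `nn` is a norm and `dn` its dual norm
    (hnn : ∀ x y, nn (x + y) ≤ nn x + nn y) (hnn₀ : ∀ x, (nn x = 0 ↔ x = 0))
    (hnn_smul : ∀ (c : ℝ) x, nn (c • x) = |c| * nn x)
    (hdn : ∀ y, IsGreatest {r : ℝ | ∃ x, nn x ≤ 1 ∧ ⟪x, y⟫ = r} (dn y))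
    -- `ω` is continuously differentiable with gradient `g`, strongly convex with modulus 1
    (hgrad : ∀ x, HasGradientAt ω (g x) x) (hgcont : Continuous g)
    (hstrong : ∀ x ∈ X, ∀ z ∈ X, ω z ≥ ω x + ⟪g x, z - x⟫ + (1 / 2) * (nn (z - x)) ^ 2)
    (V : EuclideanSpace ℝ (Fin n) → EuclideanSpace ℝ (Fin n) → ℝ)
    (hV : ∀ x z, V x z = ω z - ω x - ⟪g x, z - x⟫)
    -- Bregman distance sandwiched between (1/2)‖·‖² and (Q/2)‖·‖²
    (Q : ℝ) (hQ : 1 ≤ Q)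
    (hVlow : ∀ x ∈ X, ∀ z ∈ X, (1 / 2) * (nn (x - z)) ^ 2 ≤ V x z)
    (hVup : ∀ x ∈ X, ∀ z ∈ X, V x z ≤ Q / 2 * (nn (x - z)) ^ 2)
    -- `Gk` is μG-strongly convex with subgradient `G'` at `xk`
    (μG : ℝ) (hμG : 0 < μG)
    (Gk : EuclideanSpace ℝ (Fin n) → ℝ)
    (xk xk1 : EuclideanSpace ℝ (Fin n)) (hxk : xk ∈ X) (hxk1 : xk1 ∈ X)
    (G' : EuclideanSpace ℝ (Fin n))
    (hG' : ∀ x ∈ X, Gk x ≥ Gk xk + ⟪G', x - xk⟫ + μG / 2 * (nn (x - xk)) ^ 2)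
    (γ η : ℝ) (hγ : 0 < γ) (hviol : Gk xk > η)
    (hprox : IsMinOn (fun z => ⟪γ • G', z⟫ + V xk z) X xk1) :
    ∀ x ∈ X, V xk1 x ≤ (1 - μG * γ / Q) * V xk x - γ * (η - Gk x)
      + (1 / 2) * γ ^ 2 * (dn G') ^ 2 :=
  stmt_16_general X hXconvex ω g nn dn hnn₀ hnn_smul hdn hgrad V hV Q hQ hVlow hVup μG hμG Gk xk xk1
    hxk hxk1 G' hG' γ η hγ hviol hprox
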